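/- arXiv:2505.20870 — 6 statements merged into one kernel-verified Lean document; each statement's English description precedes it below -/
import Mathlib

section
/- For every real number η1 and every positive real number η2, one has 0 ≤ |η1| − η1 · tanh(η1/η2) ≤ 0.2785 · η2, where tanh is the real hyperbolic tangent. -/
lemma exp_num : (2000:ℝ)/557 ≤ Real.exp 1.2785 := by
  have h := Real.sum_le_exp_of_nonneg (x := 1.2785) (by norm_num) 9
  refine le_trans ?_ h
  simp only [Finset.sum_range_succ]
  norm_num [Nat.factorial]

lemma key (t : ℝ) (ht : 0 ≤ t) : t ≤ 0.2785 * (Real.exp t + 1) := by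
  rcases le_or_gt t 0.2785 with h | h
  · have := Real.exp_pos t
    nlinarith
  · have h1 : Real.exp 1.2785 * (1 + (t - 1.2785)) ≤ Real.exp t := by
      have := Real.add_one_le_exp (t - 1.2785)
      have := (Real.exp_pos 1.2785).le
      calc Real.exp 1.2785 * (1 + (t - 1.2785)) ≤ Real.exp 1.2785 * Real.exp (t - 1.2785) := by
            nlinarith [Real.add_one_le_exp (t - 1.2785)]
        _ = Real.exp t := by rw [← Real.exp_add]; ring_nf
    have h2 := exp_num
    have := Real.exp_pos 1.2785
    nlinarith

lemma tanh_eq (x : ℝ) : Real.tanh x = (Real.exp (2*x) - 1) / (Real.exp (2*x) + 1) := by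
  rw [Real.tanh_eq_sinh_div_cosh, Real.sinh_eq, Real.cosh_eq]
  have h1 : Real.exp (2*x) = Real.exp x * Real.exp x := by
    rw [two_mul, Real.exp_add]
  have h2 : Real.exp x * Real.exp (-x) = 1 := by
    rw [← Real.exp_add]; simp
  have e1 := Real.exp_pos x
  have e2 := Real.exp_pos (-x)
  have e3 := Real.exp_pos (2*x)
  field_simp
  have h1' : Real.exp (x*2) = Real.exp x * Real.exp x := by rw [mul_comm]; exact h1
  linear_combination (-2 * Real.exp x) * h2 + (-2 * Real.exp (-x)) * h1'

lemma aux (a b : ℝ) (ha : 0 ≤ a) (hb : 0 < b) :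
    0 ≤ a - a * Real.tanh (a / b) ∧ a - a * Real.tanh (a / b) ≤ 0.2785 * b := by
  set t : ℝ := 2 * (a / b) with htdef
  have ht : 0 ≤ t := by positivity
  have hE := Real.exp_pos t
  have heq : a - a * Real.tanh (a / b) = 2 * a / (Real.exp t + 1) := by
    rw [tanh_eq]
    field_simp
    rw [htdef]; ring_nf
  rw [heq]
  constructor
  · positivity
  · have hk := key t ht
    rw [div_le_iff₀ (by positivity)]
    have : t * b = 2 * a := by rw [htdef]; field_simp
    nlinarith

/-- Hyperbolic-tangent approximation bound (Lemma 3). -/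
theorem tanh_approximation_bound (η1 η2 : ℝ) (hη2 : 0 < η2) :
    0 ≤ |η1| - η1 * Real.tanh (η1 / η2) ∧
      |η1| - η1 * Real.tanh (η1 / η2) ≤ 0.2785 * η2 := by
  rcases le_or_gt 0 η1 with h | h
  · have := aux η1 η2 h hη2
    rwa [abs_of_nonneg h]
  · have := aux (-η1) η2 (by linarith) hη2
    rw [abs_of_neg h]
    have hrw : -η1 - -η1 * Real.tanh (-η1 / η2) = -η1 - η1 * Real.tanh (η1 / η2) := by
      rw [neg_div, Real.tanh_neg]; ring
    rwa [hrw] at this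
end

section
/- Let a, b, c > 0, q > 1, 0 < p < 1 and 0 < I < 1. Let V : [0,∞) → ℝ be differentiable with V(t) ≥ 0 and V′(t) ≤ −a·V(t)^q − b·V(t)^p + c for all t ≥ 0. Then for every t ≥ T_max := 1/(a·I·(q−1)) + 1/(b·I·(1−p)) one has V(t) ≤ min{ (c/((1−I)·a))^{1/q}, (c/((1−I)·b))^{1/p} }. -/
/-- Semi-global practical fixed-time stability comparison principle. -/
theorem fixed_time_comparison_principle
    (a b c q p I : ℝ) (ha : 0 < a) (hb : 0 < b) (hc : 0 < c)
    (hq : 1 < q) (hp0 : 0 < p) (hp1 : p < 1) (hI0 : 0 < I) (hI1 : I < 1)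
    (V V' : ℝ → ℝ)
    (hVnonneg : ∀ t, 0 ≤ t → 0 ≤ V t)
    (hVderiv : ∀ t, 0 ≤ t → HasDerivWithinAt V (V' t) (Set.Ici 0) t)
    (hVineq : ∀ t, 0 ≤ t → V' t ≤ -a * V t ^ q - b * V t ^ p + c) :
    ∀ t, 1 / (a * I * (q - 1)) + 1 / (b * I * (1 - p)) ≤ t →
      V t ≤ min ((c / ((1 - I) * a)) ^ (1 / q)) ((c / ((1 - I) * b)) ^ (1 / p)) := by
  intro t ht
  have hI1' : (0:ℝ) < 1 - I := by linarith
  have hq0 : (0:ℝ) < q := by linarith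
  have hq1 : (0:ℝ) < q - 1 := by linarith
  have hp1' : (0:ℝ) < 1 - p := by linarith
  set Aq : ℝ := (c / ((1 - I) * a)) ^ (1 / q) with hAqdef
  set Ap : ℝ := (c / ((1 - I) * b)) ^ (1 / p) with hApdef
  set B : ℝ := min Aq Ap with hBdef
  have hAq_pos : 0 < Aq := Real.rpow_pos_of_pos (div_pos hc (mul_pos hI1' ha)) _
  have hAp_pos : 0 < Ap := Real.rpow_pos_of_pos (div_pos hc (mul_pos hI1' hb)) _
  have hB_pos : 0 < B := lt_min hAq_pos hAp_pos
  set T1 : ℝ := 1 / (a * I * (q - 1)) with hT1def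
  set T2 : ℝ := 1 / (b * I * (1 - p)) with hT2def
  have hT1_pos : 0 < T1 := by positivity
  have hT2_pos : 0 < T2 := by positivity
  set T : ℝ := T1 + T2 with hTdef
  have hT_pos : 0 < T := by positivity
  have hVcont : ContinuousOn V (Set.Ici 0) := fun s hs =>
    (hVderiv s hs).continuousWithinAt
  -- key derivative bound on the region V > B
  have key : ∀ s, 0 ≤ s → B < V s →
      V' s ≤ -(I * a) * V s ^ q - (I * b) * V s ^ p := by
    intro s hs hVs
    have hV0 : 0 ≤ V s := hVnonneg s hs
    have h1 := hVineq s hs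
    have hVq : 0 ≤ V s ^ q := Real.rpow_nonneg hV0 _
    have hVp : 0 ≤ V s ^ p := Real.rpow_nonneg hV0 _
    rcases min_lt_iff.mp hVs with hlt | hlt
    · have hpow : c / ((1 - I) * a) < V s ^ q := by
        have h2 : Aq ^ q < V s ^ q := Real.rpow_lt_rpow hAq_pos.le hlt hq0
        rwa [hAqdef, one_div,
          Real.rpow_inv_rpow (le_of_lt (div_pos hc (mul_pos hI1' ha))) hq0.ne'] at h2
      have h3 : c < V s ^ q * ((1 - I) * a) := (div_lt_iff₀ (mul_pos hI1' ha)).mp hpow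
      linarith [mul_nonneg (mul_nonneg hI1'.le hb.le) hVp]
    · have hpow : c / ((1 - I) * b) < V s ^ p := by
        have h2 : Ap ^ p < V s ^ p := Real.rpow_lt_rpow hAp_pos.le hlt hp0
        rwa [hApdef, one_div,
          Real.rpow_inv_rpow (le_of_lt (div_pos hc (mul_pos hI1' hb))) hp0.ne'] at h2
      have h3 : c < V s ^ p * ((1 - I) * b) := (div_lt_iff₀ (mul_pos hI1' hb)).mp hpow
      linarith [mul_nonneg (mul_nonneg hI1'.le ha.le) hVq]
  -- consequences
  have keyb : ∀ s, 0 ≤ s → B < V s → V' s ≤ -(I * b) * V s ^ p := by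
    intro s hs hVs
    have h1 := key s hs hVs
    have hVq : 0 ≤ V s ^ q := Real.rpow_nonneg (hVnonneg s hs) _
    linarith [mul_nonneg (mul_nonneg hI0.le ha.le) hVq]
  have keyneg : ∀ s, 0 ≤ s → B < V s → V' s < 0 := by
    intro s hs hVs
    have h1 := keyb s hs hVs
    have hVpos : 0 < V s := lt_trans hB_pos hVs
    have h2 : 0 < V s ^ p := Real.rpow_pos_of_pos hVpos _
    linarith [mul_pos (mul_pos hI0 hb) h2]
  have keya : ∀ s, 0 ≤ s → B < V s → 1 ≤ V s → V' s ≤ -(I * a) * V s ^ q := by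
    intro s hs hVs h1V
    have h1 := key s hs hVs
    have hVp : 0 ≤ V s ^ p := Real.rpow_nonneg (hVnonneg s hs) _
    linarith [mul_nonneg (mul_nonneg hI0.le hb.le) hVp]
  -- invariance: once below B, stays below B
  have stay : ∀ t0 t1 : ℝ, 0 ≤ t0 → t0 ≤ t1 → V t0 ≤ B → V t1 ≤ B := by
    intro t0 t1 ht0 ht01 hVt0
    by_contra hcon
    push_neg at hcon
    set S : Set ℝ := Set.Icc t0 t1 ∩ V ⁻¹' Set.Iic B with hSdef
    have hSclosed : IsClosed S :=
      ((hVcont.mono (fun x hx => le_trans ht0 hx.1)).preimage_isClosed_of_isClosed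
        isClosed_Icc isClosed_Iic)
    have hSne : S.Nonempty := ⟨t0, ⟨le_refl _, ht01⟩, hVt0⟩
    have hSbdd : BddAbove S := ⟨t1, fun x hx => hx.1.2⟩
    set s0 : ℝ := sSup S with hs0def
    have hs0S : s0 ∈ S := hSclosed.csSup_mem hSne hSbdd
    have hs0_le : s0 ≤ t1 := hs0S.1.2
    have hs0_ge : t0 ≤ s0 := hs0S.1.1
    have hs0_0 : 0 ≤ s0 := le_trans ht0 hs0_ge
    have hs0_lt : s0 < t1 := lt_of_le_of_ne hs0_le (by
      intro h; rw [h] at hs0S; exact absurd hs0S.2 (not_le.mpr hcon))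
    have hgt : ∀ u ∈ Set.Ioc s0 t1, B < V u := by
      intro u hu
      by_contra hle
      push_neg at hle
      have : u ∈ S := ⟨⟨le_trans hs0_ge hu.1.le, hu.2⟩, hle⟩
      exact absurd (le_csSup hSbdd this) (not_le.mpr hu.1)
    have hanti : StrictAntiOn V (Set.Icc s0 t1) := by
      apply strictAntiOn_of_deriv_neg (convex_Icc _ _)
      · exact hVcont.mono (fun x hx => le_trans hs0_0 hx.1)
      · intro x hx
        rw [interior_Icc] at hx
        have hx0 : 0 < x := lt_of_le_of_lt hs0_0 hx.1
        have hd : HasDerivAt V (V' x) x :=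
          (hVderiv x hx0.le).hasDerivAt (Ici_mem_nhds hx0)
        rw [hd.deriv]
        exact keyneg x hx0.le (hgt x ⟨hx.1, hx.2.le⟩)
    have := hanti (Set.left_mem_Icc.mpr hs0_lt.le)
      (Set.right_mem_Icc.mpr hs0_lt.le) hs0_lt
    have hVs0 : V s0 ≤ B := hs0S.2
    linarith
  -- reaching the residual set within time T
  have reach : ∃ t0 ∈ Set.Icc (0:ℝ) T, V t0 ≤ B := by
    by_contra hcon
    push_neg at hcon
    -- Phase 1: V drops below 1 by time T1
    have phase1 : ∃ t1 ∈ Set.Icc (0:ℝ) T1, V t1 ≤ 1 := by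
      by_contra hcon1
      push_neg at hcon1
      set m : ℝ := I * a * (q - 1) with hmdef
      have hm_pos : 0 < m := by positivity
      set g : ℝ → ℝ := fun s => V s ^ (1 - q) - m * s with hgdef
      have hmono : MonotoneOn g (Set.Icc 0 T1) := by
        apply monotoneOn_of_deriv_nonneg (convex_Icc _ _)
        · apply ContinuousOn.sub
          · apply ContinuousOn.rpow_const
            · exact hVcont.mono (fun x hx => hx.1)
            · intro x hx
              exact Or.inl (ne_of_gt (lt_trans one_pos (hcon1 x hx)))
          · exact (continuous_const.mul continuous_id).continuousOn
        · intro x hx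
          rw [interior_Icc] at hx
          have hx0 : 0 < x := hx.1
          have hVx1 : 1 < V x := hcon1 x ⟨hx0.le, hx.2.le⟩
          have hVxpos : 0 < V x := lt_trans one_pos hVx1
          have hd : HasDerivAt V (V' x) x :=
            (hVderiv x hx0.le).hasDerivAt (Ici_mem_nhds hx0)
          have hrpow : HasDerivAt (fun y : ℝ => y ^ (1 - q))
              ((1 - q) * V x ^ (1 - q - 1)) (V x) :=
            Real.hasDerivAt_rpow_const (Or.inl hVxpos.ne')
          have hgd : HasDerivAt g ((1 - q) * V x ^ (1 - q - 1) * V' x - m) x :=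
            (hrpow.comp x hd).sub ((hasDerivAt_id x).const_mul m |>.congr_deriv
              (by ring))
          exact hgd.differentiableAt.differentiableWithinAt
        · intro x hx
          rw [interior_Icc] at hx
          have hx0 : 0 < x := hx.1
          have hVx1 : 1 < V x := hcon1 x ⟨hx0.le, hx.2.le⟩
          have hVxpos : 0 < V x := lt_trans one_pos hVx1
          have hd : HasDerivAt V (V' x) x :=
            (hVderiv x hx0.le).hasDerivAt (Ici_mem_nhds hx0)
          have hrpow : HasDerivAt (fun y : ℝ => y ^ (1 - q))
              ((1 - q) * V x ^ (1 - q - 1)) (V x) :=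
            Real.hasDerivAt_rpow_const (Or.inl hVxpos.ne')
          have hgd : HasDerivAt g ((1 - q) * V x ^ (1 - q - 1) * V' x - m) x :=
            (hrpow.comp x hd).sub ((hasDerivAt_id x).const_mul m |>.congr_deriv
              (by ring))
          rw [hgd.deriv]
          have hBVx : B < V x :=
            hcon x ⟨hx0.le, le_trans hx.2.le (by linarith)⟩
          have hV' : V' x ≤ -(I * a) * V x ^ q := keya x hx0.le hBVx hVx1.le
          have hexp : (1 : ℝ) - q - 1 = -q := by ring
          rw [hexp]
          have hXpos : 0 < V x ^ (-q) := Real.rpow_pos_of_pos hVxpos _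
          have hXq : V x ^ (-q) * V x ^ q = 1 := by
            rw [← Real.rpow_add hVxpos]; simp
          have h1q : 1 - q < 0 := by linarith
          nlinarith [mul_le_mul_of_nonpos_left hV' (mul_nonpos_of_nonpos_of_nonneg h1q.le hXpos.le)]
      have h01 : (0:ℝ) ∈ Set.Icc (0:ℝ) T1 := Set.left_mem_Icc.mpr hT1_pos.le
      have hT1mem : T1 ∈ Set.Icc (0:ℝ) T1 := Set.right_mem_Icc.mpr hT1_pos.le
      have hgle := hmono h01 hT1mem hT1_pos.le
      have hmT1 : m * T1 = 1 := by
        rw [hmdef, hT1def, mul_one_div, div_eq_one_iff_eq (by positivity)]; ring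
      have hg0 : 0 < V 0 ^ (1 - q) :=
        Real.rpow_pos_of_pos (lt_trans one_pos (hcon1 0 h01)) _
      have hgT1 : V T1 ^ (1 - q) < 1 :=
        Real.rpow_lt_one_of_one_lt_of_neg (hcon1 T1 hT1mem) (by linarith)
      simp only [hgdef] at hgle
      rw [mul_zero, sub_zero] at hgle
      linarith
    obtain ⟨t1, ht1mem, hVt1⟩ := phase1
    have hBlt1 : B < 1 := lt_of_lt_of_le
      (hcon t1 ⟨ht1mem.1, le_trans ht1mem.2 (by linarith)⟩) hVt1
    -- Phase 2: V ^ (1-p) decreases to 0 by time T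
    set m2 : ℝ := I * b * (1 - p) with hm2def
    have hm2_pos : 0 < m2 := by positivity
    have ht1T : t1 < T := lt_of_le_of_lt ht1mem.2 (by linarith)
    set h2f : ℝ → ℝ := fun s => V s ^ (1 - p) + m2 * s with h2fdef
    have hanti : AntitoneOn h2f (Set.Icc t1 T) := by
      apply antitoneOn_of_deriv_nonpos (convex_Icc _ _)
      · apply ContinuousOn.add
        · apply ContinuousOn.rpow_const
          · exact hVcont.mono (fun x hx => le_trans ht1mem.1 hx.1)
          · intro x hx
            have : B < V x := hcon x ⟨le_trans ht1mem.1 hx.1, hx.2⟩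
            exact Or.inl (ne_of_gt (lt_trans hB_pos this))
        · exact (continuous_const.mul continuous_id).continuousOn
      · intro x hx
        rw [interior_Icc] at hx
        have hx0 : 0 < x := lt_of_le_of_lt ht1mem.1 hx.1
        have hBVx : B < V x := hcon x ⟨hx0.le, hx.2.le⟩
        have hVxpos : 0 < V x := lt_trans hB_pos hBVx
        have hd : HasDerivAt V (V' x) x :=
          (hVderiv x hx0.le).hasDerivAt (Ici_mem_nhds hx0)
        have hrpow : HasDerivAt (fun y : ℝ => y ^ (1 - p))
            ((1 - p) * V x ^ (1 - p - 1)) (V x) :=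
          Real.hasDerivAt_rpow_const (Or.inl hVxpos.ne')
        have hgd : HasDerivAt h2f ((1 - p) * V x ^ (1 - p - 1) * V' x + m2) x :=
          (hrpow.comp x hd).add ((hasDerivAt_id x).const_mul m2 |>.congr_deriv
            (by ring))
        exact hgd.differentiableAt.differentiableWithinAt
      · intro x hx
        rw [interior_Icc] at hx
        have hx0 : 0 < x := lt_of_le_of_lt ht1mem.1 hx.1
        have hBVx : B < V x := hcon x ⟨hx0.le, hx.2.le⟩
        have hVxpos : 0 < V x := lt_trans hB_pos hBVx
        have hd : HasDerivAt V (V' x) x :=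
          (hVderiv x hx0.le).hasDerivAt (Ici_mem_nhds hx0)
        have hrpow : HasDerivAt (fun y : ℝ => y ^ (1 - p))
            ((1 - p) * V x ^ (1 - p - 1)) (V x) :=
          Real.hasDerivAt_rpow_const (Or.inl hVxpos.ne')
        have hgd : HasDerivAt h2f ((1 - p) * V x ^ (1 - p - 1) * V' x + m2) x :=
          (hrpow.comp x hd).add ((hasDerivAt_id x).const_mul m2 |>.congr_deriv
            (by ring))
        rw [hgd.deriv]
        have hV' : V' x ≤ -(I * b) * V x ^ p := keyb x hx0.le hBVx
        have hexp : (1 : ℝ) - p - 1 = -p := by ring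
        rw [hexp]
        have hXpos : 0 < V x ^ (-p) := Real.rpow_pos_of_pos hVxpos _
        have hXp : V x ^ (-p) * V x ^ p = 1 := by
          rw [← Real.rpow_add hVxpos]; simp
        nlinarith [mul_le_mul_of_nonneg_left hV' (mul_nonneg hp1'.le hXpos.le)]
    have hmem1 : t1 ∈ Set.Icc t1 T := Set.left_mem_Icc.mpr ht1T.le
    have hmemT : T ∈ Set.Icc t1 T := Set.right_mem_Icc.mpr ht1T.le
    have hle := hanti hmem1 hmemT ht1T.le
    simp only [h2fdef] at hle
    have hm2T2 : m2 * T2 = 1 := by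
      rw [hm2def, hT2def, mul_one_div, div_eq_one_iff_eq (by positivity)]; ring
    have hVT1p : V t1 ^ (1 - p) ≤ 1 :=
      Real.rpow_le_one (hVnonneg t1 ht1mem.1) hVt1 hp1'.le
    have hVTpos : 0 < V T := lt_trans hB_pos
      (hcon T ⟨hT_pos.le, le_refl _⟩)
    have hVTp : 0 < V T ^ (1 - p) := Real.rpow_pos_of_pos hVTpos _
    have ht1T1 : t1 ≤ T1 := ht1mem.2
    have hsplit : m2 * T = m2 * T1 + m2 * T2 := by rw [hTdef]; ring
    linarith [mul_le_mul_of_nonneg_left ht1T1 hm2_pos.le]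
  obtain ⟨t0, ht0mem, hVt0⟩ := reach
  exact stay t0 t ht0mem.1 (le_trans ht0mem.2 ht) hVt0
end

section
/- Let k > 0 and q > 1. Let V : [0,∞) → ℝ be differentiable with V(t) ≥ 0 and V′(t) ≤ −k·V(t)^q for all t ≥ 0. Then V(t) ≤ 1 for all t ≥ 1/(k·(q−1)), regardless of the initial value V(0). -/
open Set

/-- Fixed-time decay lemma (high-order phase). -/
theorem fixed_time_decay_high_order
    (k q : ℝ) (hk : 0 < k) (hq : 1 < q)
    (V V' : ℝ → ℝ)
    (hVnonneg : ∀ t, 0 ≤ t → 0 ≤ V t)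
    (hVderiv : ∀ t, 0 ≤ t → HasDerivWithinAt V (V' t) (Set.Ici 0) t)
    (hVineq : ∀ t, 0 ≤ t → V' t ≤ -k * V t ^ q) :
    ∀ t, 1 / (k * (q - 1)) ≤ t → V t ≤ 1 := by
  intro t ht
  set c := k * (q - 1) with hc
  have hc0 : 0 < c := mul_pos hk (by linarith)
  have hT0 : 0 < 1 / c := by positivity
  have ht0 : 0 ≤ t := le_of_lt (lt_of_lt_of_le hT0 ht)
  by_contra hV1
  push_neg at hV1
  have hcont : ContinuousOn V (Ici 0) := fun s hs => (hVderiv s hs).continuousWithinAt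
  have hderivAt : ∀ s : ℝ, 0 < s → HasDerivAt V (V' s) s := fun s hs =>
    (hVderiv s hs.le).hasDerivAt (Ici_mem_nhds hs)
  -- V is antitone on [0, ∞)
  have hanti : AntitoneOn V (Ici 0) := by
    apply antitoneOn_of_deriv_nonpos (convex_Ici 0) hcont
    · intro s hs
      rw [interior_Ici] at hs
      exact (hderivAt s hs).differentiableAt.differentiableWithinAt
    · intro s hs
      rw [interior_Ici] at hs
      rw [(hderivAt s hs).deriv]
      have h1 := hVineq s hs.le
      have h2 : (0:ℝ) ≤ V s ^ q := Real.rpow_nonneg (hVnonneg s hs.le) q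
      nlinarith
  have hVs : ∀ s ∈ Icc (0:ℝ) t, 1 < V s := fun s hs =>
    lt_of_lt_of_le hV1 (hanti hs.1 ht0 hs.2)
  -- Auxiliary function g s = c s - V s ^ (1 - q)
  set g : ℝ → ℝ := fun s => c * s - V s ^ (1 - q) with hg
  have hgderiv : ∀ s ∈ Ioo (0:ℝ) t,
      HasDerivAt g (c - V' s * (1 - q) * V s ^ (1 - q - 1)) s := by
    intro s hs
    have hVpos : 0 < V s := lt_trans one_pos (hVs s ⟨hs.1.le, hs.2.le⟩)
    have h1 := (hderivAt s hs.1).rpow_const (p := 1 - q) (Or.inl (ne_of_gt hVpos))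
    have h2 : HasDerivAt (fun s : ℝ => c * s) c s := by
      simpa using (hasDerivAt_id s).const_mul c
    exact h2.sub h1
  have hgcont : ContinuousOn g (Icc 0 t) := by
    apply ContinuousOn.sub (continuous_const.mul continuous_id).continuousOn
    apply ContinuousOn.rpow_const (hcont.mono (Icc_subset_Ici_self))
    intro s hs
    exact Or.inl (ne_of_gt (lt_trans one_pos (hVs s hs)))
  -- g is antitone on [0, t]
  have hganti : AntitoneOn g (Icc 0 t) := by
    apply antitoneOn_of_deriv_nonpos (convex_Icc 0 t) hgcont
    · intro s hs
      rw [interior_Icc] at hs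
      exact (hgderiv s hs).differentiableAt.differentiableWithinAt
    · intro s hs
      rw [interior_Icc] at hs
      rw [(hgderiv s hs).deriv]
      have hVpos : 0 < V s := lt_trans one_pos (hVs s ⟨hs.1.le, hs.2.le⟩)
      have hA : (0:ℝ) < V s ^ ((1 - q) - 1) := Real.rpow_pos_of_pos hVpos _
      have hprod : V s ^ q * V s ^ ((1 - q) - 1) = 1 := by
        rw [← Real.rpow_add hVpos]
        norm_num
      have hneg : V s ^ ((1 - q) - 1) * (1 - q) ≤ 0 := by nlinarith
      have h2 : (-k * V s ^ q) * (V s ^ ((1 - q) - 1) * (1 - q)) ≤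
          V' s * (V s ^ ((1 - q) - 1) * (1 - q)) :=
        mul_le_mul_of_nonpos_right (hVineq s hs.1.le) hneg
      have h3 : (-k * V s ^ q) * (V s ^ ((1 - q) - 1) * (1 - q)) = c := by
        rw [hc]; linear_combination (-k * (1 - q)) * hprod
      have h4 : c ≤ V' s * (1 - q) * V s ^ (1 - q - 1) := by nlinarith
      linarith
  have hstep : g t ≤ g 0 := hganti (left_mem_Icc.mpr ht0) (right_mem_Icc.mpr ht0) ht0
  have hg0 : g 0 ≤ 0 := by
    simp only [hg, mul_zero, zero_sub, neg_nonpos]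
    exact Real.rpow_nonneg (hVnonneg 0 le_rfl) _
  have hWt : V t ^ (1 - q) < 1 :=
    Real.rpow_lt_one_of_one_lt_of_neg hV1 (by linarith)
  have hct : (1:ℝ) ≤ c * t := by
    have := mul_le_mul_of_nonneg_left ht hc0.le
    rwa [mul_one_div, div_self hc0.ne'] at this
  have : c * t - V t ^ (1 - q) ≤ 0 := le_trans hstep hg0
  linarith
end

section
/- Let k > 0, 0 < p < 1 and δ ≥ 0. Let V : [0,∞) → ℝ be differentiable with V(t) ≥ 0 for all t, V(0) ≤ 1, and V′(t) ≤ −k·V(t)^p at every t with V(t) > δ. Then V(t) ≤ δ for all t ≥ 1/(k·(1−p)). -/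
/-- Finite-time decay lemma with residual level (low-order phase). -/
theorem finite_time_decay_low_order
    (k p δ : ℝ) (hk : 0 < k) (hp0 : 0 < p) (hp1 : p < 1) (hδ : 0 ≤ δ)
    (V V' : ℝ → ℝ)
    (hVnonneg : ∀ t, 0 ≤ t → 0 ≤ V t)
    (hV0 : V 0 ≤ 1)
    (hVderiv : ∀ t, 0 ≤ t → HasDerivWithinAt V (V' t) (Set.Ici 0) t)
    (hVineq : ∀ t, 0 ≤ t → δ < V t → V' t ≤ -k * V t ^ p) :
    ∀ t, 1 / (k * (1 - p)) ≤ t → V t ≤ δ := by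
  have hkp : 0 < k * (1 - p) := mul_pos hk (by linarith)
  set T : ℝ := 1 / (k * (1 - p)) with hT
  have hT0 : 0 < T := by positivity
  have hVcont : ContinuousOn V (Set.Ici 0) := fun x hx =>
    (hVderiv x hx).continuousWithinAt
  have hderivAt : ∀ u : ℝ, 0 < u → HasDerivAt V (V' u) u := by
    intro u hu
    exact (hVderiv u hu.le).hasDerivAt (Ici_mem_nhds hu)
  -- Step A: once below δ, stays below δ
  have stays : ∀ s t : ℝ, 0 ≤ s → s ≤ t → V s ≤ δ → V t ≤ δ := by
    intro s t hs hst hVs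
    by_contra hlt
    push_neg at hlt
    have hScl : IsClosed (Set.Icc s t ∩ V ⁻¹' Set.Iic δ) := by
      have hcont : ContinuousOn V (Set.Icc s t) :=
        hVcont.mono (fun x hx => le_trans hs hx.1)
      exact hcont.preimage_isClosed_of_isClosed isClosed_Icc isClosed_Iic
    have hSne : (Set.Icc s t ∩ V ⁻¹' Set.Iic δ).Nonempty := ⟨s, ⟨le_refl s, hst⟩, hVs⟩
    have hSbdd : BddAbove (Set.Icc s t ∩ V ⁻¹' Set.Iic δ) := ⟨t, fun u hu => hu.1.2⟩
    obtain ⟨c, ⟨hcIcc, hVc⟩, hcub⟩ :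
        ∃ c, c ∈ Set.Icc s t ∩ V ⁻¹' Set.Iic δ ∧
          ∀ u ∈ Set.Icc s t ∩ V ⁻¹' Set.Iic δ, u ≤ c :=
      ⟨sSup (Set.Icc s t ∩ V ⁻¹' Set.Iic δ), hScl.csSup_mem hSne hSbdd,
        fun u hu => le_csSup hSbdd hu⟩
    have hVc' : V c ≤ δ := hVc
    have hct : c < t := lt_of_le_of_ne hcIcc.2 (by
      rintro rfl; exact absurd hVc' (not_le.mpr hlt))
    have hc0 : 0 ≤ c := le_trans hs hcIcc.1
    have hgt : ∀ u, c < u → u ≤ t → δ < V u := by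
      intro u hcu hut
      by_contra hcon
      push_neg at hcon
      have : u ∈ Set.Icc s t ∩ V ⁻¹' Set.Iic δ :=
        ⟨⟨le_trans hcIcc.1 hcu.le, hut⟩, hcon⟩
      exact absurd (hcub u this) (not_le.mpr hcu)
    have hanti : AntitoneOn V (Set.Icc c t) := by
      apply antitoneOn_of_deriv_nonpos (convex_Icc c t)
        (hVcont.mono (fun x hx => le_trans hc0 hx.1))
      · intro u hu
        rw [interior_Icc] at hu
        exact (hderivAt u (lt_of_le_of_lt hc0 hu.1)).differentiableAt.differentiableWithinAt
      · intro u hu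
        rw [interior_Icc] at hu
        have hu0 : 0 < u := lt_of_le_of_lt hc0 hu.1
        have hVu : δ < V u := hgt u hu.1 hu.2.le
        rw [(hderivAt u hu0).deriv]
        have := hVineq u hu0.le hVu
        have hpow : 0 ≤ V u ^ p := Real.rpow_nonneg (hVnonneg u hu0.le) p
        nlinarith
    have := hanti ⟨le_refl c, hct.le⟩ ⟨hct.le, le_refl t⟩ hct.le
    linarith
  -- Step B: V reaches δ by time T
  have reach : ∃ s ∈ Set.Icc (0:ℝ) T, V s ≤ δ := by
    by_contra h
    push_neg at h
    set g : ℝ → ℝ := fun u => V u ^ (1 - p) + k * (1 - p) * u with hg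
    have hdg : ∀ u ∈ Set.Ioo (0:ℝ) T,
        HasDerivAt g (V' u * (1 - p) * V u ^ (1 - p - 1) + k * (1 - p)) u := by
      intro u hu
      have hu0 : 0 < u := hu.1
      have hVupos : 0 < V u := lt_of_le_of_lt hδ (h u ⟨hu0.le, hu.2.le⟩)
      apply HasDerivAt.add
      · exact (hderivAt u hu0).rpow_const (Or.inl (ne_of_gt hVupos))
      · simpa using (hasDerivAt_id u).const_mul (k * (1 - p))
    have hanti : AntitoneOn g (Set.Icc 0 T) := by
      apply antitoneOn_of_deriv_nonpos (convex_Icc 0 T)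
      · apply ContinuousOn.add
        · exact ((hVcont.mono (fun x hx => hx.1)).rpow_const
            (fun x hx => Or.inr (by linarith)))
        · exact (continuous_const.mul continuous_id).continuousOn
      · intro u hu
        rw [interior_Icc] at hu
        exact (hdg u hu).differentiableAt.differentiableWithinAt
      · intro u hu
        rw [interior_Icc] at hu
        have hu0 : 0 < u := hu.1
        have hVu : δ < V u := h u ⟨hu0.le, hu.2.le⟩
        have hVupos : 0 < V u := lt_of_le_of_lt hδ hVu
        rw [(hdg u hu).deriv]
        have hineq := hVineq u hu0.le hVu
        have h1 : V u ^ (1 - p - 1) = V u ^ (-p) := by norm_num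
        have h2 : V u ^ p * V u ^ (-p) = 1 := by
          rw [← Real.rpow_add hVupos]; norm_num
        have hpownn : 0 < V u ^ (-p) := Real.rpow_pos_of_pos hVupos _
        rw [h1]
        nlinarith [mul_le_mul_of_nonneg_right hineq
          (mul_nonneg (by linarith : (0:ℝ) ≤ 1 - p) hpownn.le), h2]
    have hgT := hanti ⟨le_refl 0, hT0.le⟩ ⟨hT0.le, le_refl T⟩ hT0.le
    have hkT : k * (1 - p) * T = 1 := by
      rw [hT]; exact mul_one_div_cancel hkp.ne'
    have hV0pow : V 0 ^ (1 - p) ≤ 1 :=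
      Real.rpow_le_one (hVnonneg 0 le_rfl) hV0 (by linarith)
    have hVT : δ < V T := h T ⟨hT0.le, le_refl T⟩
    have hVTpos : 0 < V T ^ (1 - p) :=
      Real.rpow_pos_of_pos (lt_of_le_of_lt hδ hVT) _
    simp only [hg, mul_zero, add_zero] at hgT
    rw [hkT] at hgT
    linarith
  intro t ht
  obtain ⟨s, hs, hVs⟩ := reach
  exact stays s t hs.1 (le_trans hs.2 ht) hVs
end

section
/- Let a, b, c > 0, q > 1, 0 < p < 1, 0 < I < 1, and set D := min{ (c/((1−I)·a))^{1/q}, (c/((1−I)·b))^{1/p} }. Let V : [t0,∞) → ℝ be differentiable with V(t) ≥ 0 and V′(t) ≤ −a·V(t)^q − b·V(t)^p + c for all t ≥ t0. If V(t0) ≤ D, then V(t) ≤ D for all t ≥ t0. -/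
/-- Forward invariance of the residual set. -/
theorem residual_set_forward_invariance
    (a b c q p I t0 : ℝ) (ha : 0 < a) (hb : 0 < b) (hc : 0 < c)
    (hq : 1 < q) (hp0 : 0 < p) (hp1 : p < 1) (hI0 : 0 < I) (hI1 : I < 1)
    (V V' : ℝ → ℝ)
    (hVnonneg : ∀ t, t0 ≤ t → 0 ≤ V t)
    (hVderiv : ∀ t, t0 ≤ t → HasDerivWithinAt V (V' t) (Set.Ici t0) t)
    (hVineq : ∀ t, t0 ≤ t → V' t ≤ -a * V t ^ q - b * V t ^ p + c)
    (hV0 : V t0 ≤ min ((c / ((1 - I) * a)) ^ (1 / q)) ((c / ((1 - I) * b)) ^ (1 / p))) :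
    ∀ t, t0 ≤ t →
      V t ≤ min ((c / ((1 - I) * a)) ^ (1 / q)) ((c / ((1 - I) * b)) ^ (1 / p)) := by
  have h1I : 0 < 1 - I := by linarith
  set d1 := (c / ((1 - I) * a)) ^ (1 / q) with hd1
  set d2 := (c / ((1 - I) * b)) ^ (1 / p) with hd2
  set D := min d1 d2 with hD
  have hD0 : 0 ≤ D := le_min (Real.rpow_nonneg (by positivity) _)
    (Real.rpow_nonneg (by positivity) _)
  have hq0 : (0:ℝ) < q := by linarith
  have hkey : c / (1 - I) ≤ a * D ^ q + b * D ^ p := by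
    rcases min_cases d1 d2 with ⟨hEq, _⟩ | ⟨hEq, _⟩
    · have h1 : D ^ q = c / ((1 - I) * a) := by
        rw [hD, hEq, hd1, ← Real.rpow_mul (by positivity),
          one_div_mul_cancel (ne_of_gt hq0), Real.rpow_one]
      have h2 : a * D ^ q = c / (1 - I) := by
        rw [h1]; field_simp
      have h3 : 0 ≤ b * D ^ p := by positivity
      linarith
    · have h1 : D ^ p = c / ((1 - I) * b) := by
        rw [hD, hEq, hd2, ← Real.rpow_mul (by positivity),
          one_div_mul_cancel (ne_of_gt hp0), Real.rpow_one]
      have h2 : b * D ^ p = c / (1 - I) := by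
        rw [h1]; field_simp
      have h3 : 0 ≤ a * D ^ q := by positivity
      linarith
  have hcIc : c < c / (1 - I) := by
    rw [lt_div_iff₀ h1I]; nlinarith
  intro t1 ht1
  by_contra hgt
  push_neg at hgt
  have hcont : ContinuousOn V (Set.Icc t0 t1) := fun t ht =>
    ((hVderiv t ht.1).continuousWithinAt).mono (fun x hx => hx.1)
  set S := Set.Icc t0 t1 ∩ V ⁻¹' Set.Iic D with hS
  have hSne : S.Nonempty := ⟨t0, ⟨le_refl _, ht1⟩, hV0⟩
  have hScl : IsClosed S :=
    hcont.preimage_isClosed_of_isClosed isClosed_Icc isClosed_Iic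
  have hScomp : IsCompact S :=
    isCompact_Icc.of_isClosed_subset hScl (fun x hx => hx.1)
  set s := sSup S with hs
  have hsS : s ∈ S := hScomp.sSup_mem hSne
  obtain ⟨⟨hst0, hst1⟩, hsD⟩ := hsS
  have hst1' : s < t1 :=
    hst1.lt_of_ne (fun h => absurd (h ▸ hsD) (not_le.mpr hgt))
  -- On (s, t1), V > D
  have hVgt : ∀ t ∈ Set.Ioo s t1, D < V t := by
    intro t ht
    by_contra hle
    push_neg at hle
    have htS : t ∈ S := ⟨⟨le_trans hst0 ht.1.le, ht.2.le⟩, hle⟩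
    exact absurd (le_csSup hScomp.bddAbove htS) (not_le.mpr ht.1)
  have hanti : AntitoneOn V (Set.Icc s t1) := by
    have hconv : Convex ℝ (Set.Icc s t1) := convex_Icc s t1
    have hcont' : ContinuousOn V (Set.Icc s t1) :=
      hcont.mono (Set.Icc_subset_Icc_left hst0)
    have hderiv : ∀ t ∈ interior (Set.Icc s t1), HasDerivAt V (V' t) t := by
      intro t ht
      rw [interior_Icc] at ht
      have ht0 : t0 < t := lt_of_le_of_lt hst0 ht.1
      exact (hVderiv t ht0.le).hasDerivAt (Ici_mem_nhds ht0)
    apply antitoneOn_of_deriv_nonpos hconv hcont'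
    · intro t ht
      exact (hderiv t ht).differentiableAt.differentiableWithinAt
    · intro t ht
      rw [(hderiv t ht).deriv]
      rw [interior_Icc] at ht
      have ht0 : t0 ≤ t := le_trans hst0 ht.1.le
      have hVt : D < V t := hVgt t ht
      have hmono : a * D ^ q + b * D ^ p ≤ a * V t ^ q + b * V t ^ p := by
        have h1 : D ^ q ≤ V t ^ q := Real.rpow_le_rpow hD0 hVt.le hq0.le
        have h2 : D ^ p ≤ V t ^ p := Real.rpow_le_rpow hD0 hVt.le hp0.le
        nlinarith
      have := hVineq t ht0
      linarith
  have hfin : V t1 ≤ V s :=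
    hanti ⟨le_refl s, hst1⟩ ⟨hst1, le_refl t1⟩ hst1
  exact absurd (le_trans hfin hsD) (not_le.mpr hgt)
end

section
/- Let z, α, g ∈ ℝ, Φ > 0, 0 < θ < 1, ϑ1 > 0, and ϑ̄1 ≥ ϑ1/(1 − θ). Define d := −(1 + θ)·(α·tanh(z·α/Φ) + ϑ̄1·tanh(z·ϑ̄1/Φ)). If |d − g| ≤ θ·|g| + ϑ1, then z·g ≤ −|z·α| + 0.557·Φ. -/
/-- Lower bound on `exp 0.2785`. -/
lemma exp_2785_lb : (1.32114 : ℝ) ≤ Real.exp 0.2785 := by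
  have h := Real.sum_le_exp_of_nonneg (x := 0.2785) (by norm_num) 7
  have hs : (1.32114 : ℝ) ≤ ∑ i ∈ Finset.range 7, (0.2785:ℝ) ^ i / i.factorial := by
    simp [Finset.sum_range_succ, Nat.factorial]
    norm_num
  exact le_trans hs h

/-- Lower bound on `exp 0.278`. -/
lemma exp_278_lb : (1.32048 : ℝ) ≤ Real.exp 0.278 := by
  have h := Real.sum_le_exp_of_nonneg (x := 0.278) (by norm_num) 7
  have hs : (1.32048 : ℝ) ≤ ∑ i ∈ Finset.range 7, (0.278:ℝ) ^ i / i.factorial := by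
    simp [Finset.sum_range_succ, Nat.factorial]
    norm_num
  exact le_trans hs h

/-- Upper bound on `exp 0.278`. -/
lemma exp_278_ub : Real.exp 0.278 ≤ (1.32049 : ℝ) := by
  have h := Real.exp_bound (x := 0.278) (by rw [abs_le]; norm_num) (n := 7) (by norm_num)
  rw [abs_le] at h
  have h2 := h.2
  have hs : (∑ i ∈ Finset.range 7, (0.278:ℝ) ^ i / i.factorial) +
      |(0.278:ℝ)| ^ 7 * (((7:ℕ).succ : ℝ) / ((Nat.factorial 7 : ℝ) * (7:ℕ))) ≤ 1.32049 := by
    have habs : |(0.278:ℝ)| = 0.278 := abs_of_nonneg (by norm_num)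
    simp [Finset.sum_range_succ, Nat.factorial, habs]
    norm_num
  linarith

lemma exp_a_lb : (3.5912 : ℝ) ≤ Real.exp 1.2785 := by
  have h1 : Real.exp 1.2785 = Real.exp 1 * Real.exp 0.2785 := by
    rw [← Real.exp_add]; norm_num
  have h2 := Real.exp_one_gt_d9
  have h3 := exp_2785_lb
  have h4 : (0:ℝ) < Real.exp 0.2785 := Real.exp_pos _
  nlinarith

lemma exp_b_lb : (3.5894 : ℝ) ≤ Real.exp 1.278 := by
  have h1 : Real.exp 1.278 = Real.exp 1 * Real.exp 0.278 := by
    rw [← Real.exp_add]; norm_num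
  have h2 := Real.exp_one_gt_d9
  have h3 := exp_278_lb
  nlinarith

lemma exp_b_ub : Real.exp 1.278 ≤ (3.5895 : ℝ) := by
  have h1 : Real.exp 1.278 = Real.exp 1 * Real.exp 0.278 := by
    rw [← Real.exp_add]; norm_num
  have h2 := Real.exp_one_lt_d9
  have h3 := exp_278_ub
  have h4 : (0:ℝ) < Real.exp 0.278 := Real.exp_pos _
  nlinarith

/-- Key scalar inequality: `s ≤ 0.2785 eˢ + 0.2785` for `s ≥ 0`. -/
lemma key_exp_ineq (s : ℝ) (hs : 0 ≤ s) :
    s ≤ 0.2785 * Real.exp s + 0.2785 := by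
  rcases le_total s 1.2785 with h | h
  · -- use the tangent of `exp` at 1.278
    have ht : Real.exp 1.278 * (1 + (s - 1.278)) ≤ Real.exp s := by
      have h1 : Real.exp s = Real.exp 1.278 * Real.exp (s - 1.278) := by
        rw [← Real.exp_add]; ring_nf
      have h2 := Real.add_one_le_exp (s - 1.278)
      have h3 : (0:ℝ) < Real.exp 1.278 := Real.exp_pos _
      nlinarith
    have hlb := exp_b_lb
    have hub := exp_b_ub
    nlinarith [mul_nonneg (sub_nonneg.mpr hub) (sub_nonneg.mpr h),
      mul_nonneg (sub_nonneg.mpr hlb) hs,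
      mul_nonneg (sub_nonneg.mpr hub) hs,
      mul_nonneg (sub_nonneg.mpr hlb) (sub_nonneg.mpr h)]
  · -- use the tangent of `exp` at 1.2785
    have ht : Real.exp 1.2785 * (1 + (s - 1.2785)) ≤ Real.exp s := by
      have h1 : Real.exp s = Real.exp 1.2785 * Real.exp (s - 1.2785) := by
        rw [← Real.exp_add]; ring_nf
      have h2 := Real.add_one_le_exp (s - 1.2785)
      have h3 : (0:ℝ) < Real.exp 1.2785 := Real.exp_pos _
      nlinarith
    have hlb := exp_a_lb
    nlinarith [mul_nonneg (sub_nonneg.mpr hlb) (sub_nonneg.mpr h)]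

/-- Core hyperbolic-tangent inequality: `t (1 - tanh t) ≤ 0.2785` for `t ≥ 0`. -/
lemma core_tanh (t : ℝ) (ht : 0 ≤ t) : t * (1 - Real.tanh t) ≤ 0.2785 := by
  have hc : 0 < Real.cosh t := Real.cosh_pos t
  have h1 : 1 - Real.tanh t = Real.exp (-t) / Real.cosh t := by
    rw [Real.tanh_eq_sinh_div_cosh, ← Real.cosh_sub_sinh]
    field_simp [hc.ne']
  rw [h1, ← mul_div_assoc, div_le_iff₀ hc, Real.cosh_eq]
  have hK := key_exp_ineq (2 * t) (by linarith)
  have hprod : 0 ≤ (0.2785 * Real.exp (2*t) + 0.2785 - 2*t) * Real.exp (-t) := by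
    have := Real.exp_pos (-t)
    nlinarith
  have h4 : Real.exp (2*t) * Real.exp (-t) = Real.exp t := by
    rw [← Real.exp_add]; ring_nf
  nlinarith [Real.exp_pos (-t), Real.exp_pos t]

/-- `|x| ≤ x tanh(x/Φ) + 0.2785 Φ`. -/
lemma abs_le_mul_tanh (x Φ : ℝ) (hΦ : 0 < Φ) :
    |x| ≤ x * Real.tanh (x / Φ) + 0.2785 * Φ := by
  have hx : x * Real.tanh (x / Φ) = |x| * Real.tanh (|x| / Φ) := by
    rcases le_or_gt 0 x with h | h
    · rw [abs_of_nonneg h]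
    · rw [abs_of_neg h, neg_div, Real.tanh_neg]; ring
  have ht : (0:ℝ) ≤ |x| / Φ := div_nonneg (abs_nonneg x) hΦ.le
  have hcore := core_tanh (|x| / Φ) ht
  have h5 : Φ * ((|x| / Φ) * (1 - Real.tanh (|x| / Φ))) =
      |x| - |x| * Real.tanh (|x| / Φ) := by
    field_simp
  have h6 : Φ * ((|x| / Φ) * (1 - Real.tanh (|x| / Φ))) ≤ Φ * 0.2785 :=
    mul_le_mul_of_nonneg_left hcore hΦ.le
  rw [hx]
  nlinarith [h5 ▸ h6]

/-- `x tanh(x/Φ) ≥ 0`. -/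
lemma mul_tanh_nonneg (x Φ : ℝ) (hΦ : 0 < Φ) : 0 ≤ x * Real.tanh (x / Φ) := by
  have hx : x * Real.tanh (x / Φ) = |x| * Real.tanh (|x| / Φ) := by
    rcases le_or_gt 0 x with h | h
    · rw [abs_of_nonneg h]
    · rw [abs_of_neg h, neg_div, Real.tanh_neg]; ring
  rw [hx]
  apply mul_nonneg (abs_nonneg x)
  rw [Real.tanh_eq_sinh_div_cosh]
  apply div_nonneg _ (Real.cosh_pos _).le
  exact Real.sinh_nonneg_iff.mpr (div_nonneg (abs_nonneg x) hΦ.le)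

set_option maxHeartbeats 1000000 in
/-- Key inequality of the relative-threshold (and self-triggered) strategy. -/
theorem relative_threshold_key_inequality (z α g Φ θ ϑ1 ϑbar1 : ℝ)
    (hΦ : 0 < Φ) (hθ0 : 0 < θ) (hθ1 : θ < 1) (hϑ1 : 0 < ϑ1)
    (hϑbar1 : ϑ1 / (1 - θ) ≤ ϑbar1)
    (hd : |(-(1 + θ) * (α * Real.tanh (z * α / Φ) + ϑbar1 * Real.tanh (z * ϑbar1 / Φ))) - g| ≤
      θ * |g| + ϑ1) :
    z * g ≤ -|z * α| + 0.557 * Φ := by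
  set d : ℝ := -(1 + θ) * (α * Real.tanh (z * α / Φ) + ϑbar1 * Real.tanh (z * ϑbar1 / Φ)) with hd_def
  set P : ℝ := (z * α) * Real.tanh (z * α / Φ) with hP_def
  set Q : ℝ := (z * ϑbar1) * Real.tanh (z * ϑbar1 / Φ) with hQ_def
  have hP0 : 0 ≤ P := mul_tanh_nonneg (z * α) Φ hΦ
  have hQ0 : 0 ≤ Q := mul_tanh_nonneg (z * ϑbar1) Φ hΦ
  have hPabs : |z * α| ≤ P + 0.2785 * Φ := abs_le_mul_tanh (z * α) Φ hΦ
  have hQabs : |z * ϑbar1| ≤ Q + 0.2785 * Φ := abs_le_mul_tanh (z * ϑbar1) Φ hΦ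
  have hϑb0 : 0 ≤ ϑbar1 := le_trans (le_of_lt (div_pos hϑ1 (by linarith))) hϑbar1
  have hϑ1le : ϑ1 ≤ (1 - θ) * ϑbar1 := by
    rw [div_le_iff₀ (by linarith : (0:ℝ) < 1 - θ)] at hϑbar1
    linarith
  have habsQ : |z * ϑbar1| = ϑbar1 * |z| := by
    rw [abs_mul, abs_of_nonneg hϑb0]; ring
  have hzd : z * d = -(1 + θ) * (P + Q) := by rw [hd_def, hP_def, hQ_def]; ring
  -- consequence of the triggering condition
  have h7 : z * g - z * d ≤ |z| * (θ * |g| + ϑ1) := by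
    calc z * g - z * d = -(z * (d - g)) := by ring
      _ ≤ |z * (d - g)| := neg_le_abs _
      _ = |z| * |d - g| := abs_mul z (d - g)
      _ ≤ |z| * (θ * |g| + ϑ1) := mul_le_mul_of_nonneg_left hd (abs_nonneg z)
  have hzg_abs : |z| * |g| = |z * g| := (abs_mul z g).symm
  have hmid : z * g ≤ -(P + Q) + ϑbar1 * |z| := by
    have hz0 : (0:ℝ) ≤ |z| := abs_nonneg z
    rcases le_or_gt 0 (z * g) with hzg | hzg
    · have habs : |z * g| = z * g := abs_of_nonneg hzg
      have h9 : |z| * (θ * |g| + ϑ1) = θ * |z * g| + ϑ1 * |z| := by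
        rw [abs_mul z g]; ring
      have h8 : (1 - θ) * (z * g) ≤ -(1 + θ) * (P + Q) + ϑ1 * |z| := by
        rw [hzd] at h7
        rw [h9, habs] at h7
        nlinarith [h7]
      nlinarith [h8, mul_nonneg hθ0.le (add_nonneg hP0 hQ0),
        mul_nonneg hz0 (by linarith : (0:ℝ) ≤ (1 - θ) * ϑbar1 - ϑ1),
        sub_pos.mpr hθ1]
    · have habs : |z * g| = -(z * g) := abs_of_neg hzg
      have h9 : |z| * (θ * |g| + ϑ1) = θ * |z * g| + ϑ1 * |z| := by
        rw [abs_mul z g]; ring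
      have h8 : (1 + θ) * (z * g) ≤ -(1 + θ) * (P + Q) + ϑ1 * |z| := by
        rw [hzd] at h7
        rw [h9, habs] at h7
        nlinarith [h7]
      nlinarith [h8, mul_nonneg hz0 (by nlinarith : (0:ℝ) ≤ (1 + θ) * ϑbar1 - ϑ1),
        mul_nonneg hθ0.le (add_nonneg hP0 hQ0)]
  calc z * g ≤ -(P + Q) + ϑbar1 * |z| := hmid
    _ ≤ -|z * α| + 0.557 * Φ := by
        rw [habsQ] at hQabs
        nlinarith [hPabs, hQabs]
end
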